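/- Let φ : ℝ → ℝ be smooth, compactly supported, with φ(0) ≠ 0, and define h_n(x) = φ(x)^{Q+1}·cos((17/12)·2ⁿ x) (up to constants, the product g_n^Q · ∂ₓ f_n scaled by 2^{ns+n/... }). Then ‖h_n‖_{L^p} does not tend to 0 as n → ∞ for any 1 ≤ p ≤ ∞; in fact liminf_{n→∞} ‖h_n‖_{L^p} ≥ c > 0 for some constant c depending only on φ and p. -/

import Mathlib

open MeasureTheory Filter
open scoped Topology

/-- Non-degeneracy of the oscillating profile: for `φ` smooth compactly supported with
`φ(0) ≠ 0`, `Q ≥ 1` and `h_n(x) = φ(x)^{Q+1}·cos((17/12)·2ⁿ x)`, the `L^p` norms of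
`h_n` do not tend to `0`: `liminf_{n→∞} ‖h_n‖_{L^p} ≥ c > 0` for any `1 ≤ p ≤ ∞`. -/
theorem oscillating_profile_nondegenerate (Q : ℕ) (hQ : 1 ≤ Q) (φ : ℝ → ℝ)
    (hφ : ContDiff ℝ (⊤ : ℕ∞) φ) (hsupp : HasCompactSupport φ) (hφ0 : φ 0 ≠ 0)
    (p : ENNReal) (hp : 1 ≤ p)
    (h : ℕ → ℝ → ℝ)
    (hh : ∀ n x, h n x = φ x ^ (Q + 1) * Real.cos ((17 / 12) * 2 ^ n * x)) :
    ∃ c : ℝ, 0 < c ∧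
      ENNReal.ofReal c ≤ atTop.liminf (fun n => eLpNorm (h n) p (volume : Measure ℝ)) := by
  classical
  set ψ : ℝ → ℝ := fun x => φ x ^ (Q + 1) with hψdef
  set lam : ℕ → ℝ := fun n => (17 / 12) * 2 ^ n with hlamdef
  have hψc : Continuous ψ := hφ.continuous.pow _
  have hψsupp : HasCompactSupport ψ :=
    hsupp.comp_left (g := fun y : ℝ => y ^ (Q + 1)) (by simp)
  have hhfun : ∀ n x, h n x = ψ x * Real.cos (lam n * x) := fun n x => hh n x
  have hhc : ∀ n, Continuous (h n) := by
    intro n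
    have : h n = fun x => ψ x * Real.cos (lam n * x) := funext (hhfun n)
    rw [this]
    exact hψc.mul (Real.continuous_cos.comp (continuous_const.mul continuous_id))
  have hhsupp : ∀ n, HasCompactSupport (h n) := by
    intro n
    have : h n = fun x => ψ x * Real.cos (lam n * x) := funext (hhfun n)
    rw [this]
    exact hψsupp.mul_right
  -- the squared profile
  have hsqc : Continuous fun x => ψ x ^ 2 := hψc.pow 2
  have hsq_supp : HasCompactSupport fun x => ψ x ^ 2 :=
    hψsupp.comp_left (g := fun y : ℝ => y ^ 2) (by simp)
  have hsq_int : Integrable (fun x => ψ x ^ 2) volume :=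
    hsqc.integrable_of_hasCompactSupport hsq_supp
  set I : ℝ := ∫ x, ψ x ^ 2 with hIdef
  have hIpos : 0 < I := by
    rw [hIdef, integral_pos_iff_support_of_nonneg (fun x => sq_nonneg _) hsq_int]
    have hopen : IsOpen (Function.support fun x => ψ x ^ 2) := by
      rw [Function.support_eq_preimage]
      exact isOpen_compl_singleton.preimage hsqc
    refine hopen.measure_pos volume ⟨0, ?_⟩
    simp only [Function.mem_support, hψdef]
    positivity
  -- Riemann-Lebesgue : the oscillating correction tends to 0
  have hFc : Continuous fun x : ℝ => ((ψ x ^ 2 : ℝ) : ℂ) := Complex.continuous_ofReal.comp hsqc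
  have hFsupp : HasCompactSupport fun x : ℝ => ((ψ x ^ 2 : ℝ) : ℂ) :=
    hsq_supp.comp_left (g := fun y : ℝ => (y : ℂ)) (by simp)
  have hFint : Integrable (fun x : ℝ => ((ψ x ^ 2 : ℝ) : ℂ)) volume :=
    hFc.integrable_of_hasCompactSupport hFsupp
  have key : Tendsto (fun n => ∫ x, ψ x ^ 2 * Real.cos (2 * lam n * x)) atTop (𝓝 0) := by
    have RL := Real.tendsto_integral_exp_smul_cocompact (fun x : ℝ => ((ψ x ^ 2 : ℝ) : ℂ))
    have h2 : Tendsto (fun n : ℕ => (2 : ℝ) ^ n) atTop atTop :=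
      tendsto_pow_atTop_atTop_of_one_lt one_lt_two
    have h3 : Tendsto lam atTop atTop := h2.const_mul_atTop (by norm_num)
    have hw : Tendsto (fun n : ℕ => lam n / Real.pi) atTop atTop :=
      h3.atTop_div_const Real.pi_pos
    have hco : Tendsto (fun n : ℕ => lam n / Real.pi) atTop (cocompact ℝ) := by
      rw [cocompact_eq_atBot_atTop]
      exact hw.mono_right le_sup_right
    have comp := RL.comp hco
    have hre0 : Tendsto
        (fun n => (∫ v : ℝ, Real.fourierChar (-(v * (lam n / Real.pi))) • ((ψ v ^ 2 : ℝ) : ℂ)).re)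
        atTop (𝓝 0) := by
      simpa [Function.comp_def] using (Complex.continuous_re.tendsto 0).comp comp
    refine hre0.congr fun n => ?_
    have hint : Integrable (fun v : ℝ => Real.fourierChar (-(v * (lam n / Real.pi))) • ((ψ v ^ 2 : ℝ) : ℂ))
        volume := (Real.fourierIntegral_convergent_iff' (ContinuousLinearMap.mul ℝ ℝ) _).mpr hFint
    have hre := integral_re hint
    simp only [RCLike.re_to_complex] at hre
    rw [← hre]
    refine integral_congr_ae (Eventually.of_forall fun v => ?_)
    simp only [Circle.smul_def, Real.fourierChar_apply, smul_eq_mul]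
    rw [show (2 * Real.pi * -(v * (lam n / Real.pi))) = -(2 * lam n * v) from by
      field_simp]
    rw [Complex.mul_re, Complex.exp_ofReal_mul_I_re, Complex.exp_ofReal_mul_I_im]
    simp only [Complex.ofReal_re, Complex.ofReal_im, Real.cos_neg, Real.sin_neg, mul_zero,
      sub_zero, neg_neg, neg_zero, zero_mul, add_zero]
    ring
  -- splitting the square
  have hsplit : ∀ n, ∫ x, h n x * h n x
      = I / 2 + (∫ x, ψ x ^ 2 * Real.cos (2 * lam n * x)) / 2 := by
    intro n
    have h1 : ∀ x, h n x * h n x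
        = ψ x ^ 2 * (1 / 2) + ψ x ^ 2 * Real.cos (2 * lam n * x) * (1 / 2) := by
      intro x
      rw [hhfun n x]
      have hc := Real.cos_sq (lam n * x)
      have h2 : Real.cos (2 * (lam n * x)) = Real.cos (2 * lam n * x) := by ring_nf
      rw [h2] at hc
      nlinarith [hc]
    have hint2 : Integrable (fun x => ψ x ^ 2 * Real.cos (2 * lam n * x)) volume := by
      refine Continuous.integrable_of_hasCompactSupport ?_ hsq_supp.mul_right
      exact hsqc.mul (Real.continuous_cos.comp (continuous_const.mul continuous_id))
    calc ∫ x, h n x * h n x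
        = ∫ x, (ψ x ^ 2 * (1 / 2) + ψ x ^ 2 * Real.cos (2 * lam n * x) * (1 / 2)) := by
          simp_rw [h1]
      _ = (∫ x, ψ x ^ 2 * (1 / 2)) + ∫ x, ψ x ^ 2 * Real.cos (2 * lam n * x) * (1 / 2) :=
          integral_add (hsq_int.mul_const _) (hint2.mul_const _)
      _ = I / 2 + (∫ x, ψ x ^ 2 * Real.cos (2 * lam n * x)) / 2 := by
          rw [integral_mul_const, integral_mul_const, hIdef]; ring
  have hev : ∀ᶠ n in atTop, I / 4 ≤ ∫ x, h n x * h n x := by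
    filter_upwards [key.eventually (Metric.ball_mem_nhds (0 : ℝ) (show (0:ℝ) < I/4 by positivity))]
      with n hn
    simp only [Metric.mem_ball, Real.dist_0_eq_abs] at hn
    have h2 := abs_lt.mp hn
    rw [hsplit n]
    linarith [h2.1]
  -- Hölder exponent
  set r : ENNReal := (1 - 1/p)⁻¹ with hrdef
  have hpr : (1 : ENNReal)/1 = 1/p + 1/r := by
    simp only [hrdef, one_div, inv_inv, inv_one]
    exact (add_tsub_cancel_of_le (by rwa [ENNReal.inv_le_one])).symm
  have hrne0 : r ≠ 0 := by
    simp only [hrdef, ne_eq, ENNReal.inv_eq_zero]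
    exact ((tsub_le_self.trans_lt (by norm_num : (1:ENNReal) < ⊤)).ne)
  set B : ENNReal := eLpNorm ψ r volume with hBdef
  have hψmem : MemLp ψ r volume := hψc.memLp_of_hasCompactSupport hψsupp
  have hBlt : B < ⊤ := hψmem.eLpNorm_lt_top
  have hBne0 : B ≠ 0 := by
    rw [hBdef, ne_eq, eLpNorm_eq_zero_iff hψc.aestronglyMeasurable hrne0]
    intro hcontra
    have heq : ψ = 0 := (hψc.ae_eq_iff_eq volume continuous_const).mp hcontra
    have : ψ 0 = 0 := by rw [heq]; rfl
    exact hφ0 (by simpa [hψdef] using this)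
  -- Hölder inequality
  have hHolder : ∀ n, ENNReal.ofReal (∫ x, h n x * h n x) ≤ eLpNorm (h n) p volume * B := by
    intro n
    have hintn : Integrable (fun x => h n x * h n x) volume :=
      ((hhc n).mul (hhc n)).integrable_of_hasCompactSupport (hhsupp n).mul_right
    have h1 : ENNReal.ofReal (∫ x, h n x * h n x)
        ≤ eLpNorm (fun x => h n x * h n x) 1 volume := by
      rw [ofReal_integral_eq_lintegral_ofReal hintn
        (Eventually.of_forall fun x => mul_self_nonneg _), eLpNorm_one_eq_lintegral_enorm]
      exact lintegral_mono fun x => Real.ofReal_le_enorm _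
    refine h1.trans ?_
    have h2 := eLpNorm_le_eLpNorm_mul_eLpNorm'_of_norm (μ := volume) (p := p) (q := r) (r := 1)
      (hhc n).aestronglyMeasurable (hhc n).aestronglyMeasurable (fun a b : ℝ => a * b)
      1 (Eventually.of_forall fun x => by simp [norm_mul]) (hpqr := ⟨by simpa [one_div] using hpr.symm⟩)
    simp only [ENNReal.coe_one, one_mul] at h2
    refine h2.trans ?_
    refine mul_le_mul_right (eLpNorm_mono fun x => ?_) _
    rw [hhfun n x, hψdef]
    calc ‖φ x ^ (Q+1) * Real.cos (lam n * x)‖ = ‖φ x ^ (Q+1)‖ * ‖Real.cos (lam n * x)‖ :=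
          norm_mul _ _
      _ ≤ ‖φ x ^ (Q+1)‖ * 1 := by
          exact mul_le_mul_of_nonneg_left (by simpa using Real.abs_cos_le_one _) (norm_nonneg _)
      _ = ‖φ x ^ (Q+1)‖ := mul_one _
  -- conclusion
  set c : ℝ := (I / 4) / (B.toReal + 1) with hcdef
  have hTnn : 0 ≤ B.toReal := ENNReal.toReal_nonneg
  have hcpos : 0 < c := div_pos (by positivity) (by positivity)
  refine ⟨c, hcpos, ?_⟩
  have hev2 : ∀ᶠ n in atTop, ENNReal.ofReal c ≤ eLpNorm (h n) p volume := by
    filter_upwards [hev] with n hn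
    have h2 : ENNReal.ofReal (I / 4) ≤ eLpNorm (h n) p volume * B :=
      le_trans (ENNReal.ofReal_le_ofReal hn) (hHolder n)
    have hcB : ENNReal.ofReal c * B ≤ ENNReal.ofReal (I / 4) := by
      rw [← ENNReal.ofReal_toReal hBlt.ne, ← ENNReal.ofReal_mul hcpos.le]
      refine ENNReal.ofReal_le_ofReal ?_
      rw [hcdef, div_mul_eq_mul_div, div_le_iff₀ (by positivity)]
      nlinarith
    exact (ENNReal.mul_le_mul_iff_left hBne0 hBlt.ne).mp (hcB.trans h2)
  calc ENNReal.ofReal c = atTop.liminf (fun _ : ℕ => ENNReal.ofReal c) := (liminf_const _).symm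
    _ ≤ atTop.liminf (fun n => eLpNorm (h n) p volume) := liminf_le_liminf hev2
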